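/- arXiv:2312.14435 — 2 statements merged into one kernel-verified Lean document; each statement's English description precedes it below -/
import Mathlib

section
/- Let φ* : ℝ^n → ℝ be strictly convex and differentiable, let U be a k × n real matrix, and let A = y^P + Im(Uᵀ) be an affine subspace of ℝ^n. Fix x₀ ∈ ℝ_{>0}^n. If the function y ↦ φ*(y) - ⟨y, x₀⟩ restricted to A attains a minimum, the minimizer y^B is unique and satisfies U ∂φ*(y^B) = U x₀ together with y^B ∈ A. (Birch's theorem: the intersection of the isochoric stoichiometric manifold {y : U ∂φ*(y) = U x₀} with A is exactly {y^B}.) -/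
/-!
Write `f y = φ*(y) - ⟨y, x₀⟩`, so `∇f(y) = ∇φ*(y) - x₀`. The affine subspace `A` has direction
the row space of `U`, and `∇f(y)` annihilates the row space exactly when `U ∇φ*(y) = U x₀`.
For a convex differentiable function, vanishing of the derivative along the direction of an
affine subspace is equivalent to minimality on it (Fermat's rule one way, the gradient
inequality the other), and a strictly convex function has at most one minimizer there.
-/

open Matrix

section FirstOrderConditions

variable {E : Type*} [NormedAddCommGroup E] [NormedSpace ℝ E] {f : E → ℝ} {f' : E →L[ℝ] ℝ}
  {s : Set E} {A : AffineSubspace ℝ E} {x y : E}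

theorem ConvexOn.add_fderiv_sub_le (hf : ConvexOn ℝ s f) (hx : x ∈ s) (hy : y ∈ s)
    (hf' : HasFDerivAt f f' x) : f x + f' (y - x) ≤ f y := by
  set γ : ℝ →ᵃ[ℝ] E := AffineMap.lineMap x y
  have hline : ConvexOn ℝ (γ ⁻¹' s) (f ∘ γ) := hf.comp_affineMap γ
  have hderiv : HasDerivAt (f ∘ γ) (f' (y - x)) 0 :=
    hf'.comp_hasDerivAt_of_eq (0 : ℝ) AffineMap.hasDerivAt_lineMap (by simp [γ])
  have hslope := hline.le_slope_of_hasDerivAt (by simpa [γ]) (by simpa [γ]) one_pos hderiv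
  rw [slope_def_field] at hslope
  simp only [γ, Function.comp_apply, AffineMap.lineMap_apply_zero, AffineMap.lineMap_apply_one,
    sub_zero, div_one] at hslope
  linarith

theorem IsMinOn.direction_le_ker_of_hasFDerivAt (hmin : IsMinOn f A x) (hx : x ∈ A)
    (hf' : HasFDerivAt f f' x) : A.direction ≤ LinearMap.ker (f' : E →ₗ[ℝ] ℝ) := by
  have hcone : ∀ v ∈ A.direction, v ∈ posTangentConeAt (A : Set E) x := fun v hv =>
    mem_posTangentConeAt_of_segment_subset <| A.convex.segment_subset hx <| by
      simpa [add_comm] using AffineSubspace.vadd_mem_of_mem_direction hv hx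
  intro v hv
  exact hmin.localize.hasFDerivWithinAt_eq_zero hf'.hasFDerivWithinAt (hcone v hv)
    (hcone (-v) (neg_mem hv))

theorem ConvexOn.isMinOn_of_direction_le_ker (hf : ConvexOn ℝ A f) (hx : x ∈ A)
    (hf' : HasFDerivAt f f' x) (hker : A.direction ≤ LinearMap.ker (f' : E →ₗ[ℝ] ℝ)) :
    IsMinOn f A x := fun y hy => by
  have h0 : f' (y - x) = 0 := hker (AffineSubspace.vsub_mem_direction hy hx)
  simpa [h0] using hf.add_fderiv_sub_le hx hy hf'

theorem StrictConvexOn.eq_of_isMinOn_of_direction_le_ker (hf : StrictConvexOn ℝ A f)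
    (hmin : IsMinOn f A x) (hx : x ∈ A) (hy : y ∈ A) (hf' : HasFDerivAt f f' y)
    (hker : A.direction ≤ LinearMap.ker (f' : E →ₗ[ℝ] ℝ)) : y = x :=
  hf.eq_of_isMinOn (hf.convexOn.isMinOn_of_direction_le_ker hy hf' hker) hmin hy hx

end FirstOrderConditions

section MatrixRowSpace

variable {m n R : Type*} [Fintype m] [CommRing R] {U : Matrix m n R}

theorem Matrix.setOf_eq_add_vecMul_eq_mk' (p : n → R) :
    {y : n → R | ∃ c : m → R, y = p + c ᵥ* U} =
      AffineSubspace.mk' p (LinearMap.range U.vecMulLinear) := by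
  ext y
  simp only [SetLike.mem_coe, AffineSubspace.mem_mk', vsub_eq_sub,
    LinearMap.mem_range, coe_vecMulLinear]
  exact exists_congr fun c => by rw [eq_sub_iff_add_eq', eq_comm]

theorem Matrix.range_vecMulLinear_le_ker_iff [Fintype n] {w : n → R} {L : (n → R) →ₗ[R] R}
    (hL : ∀ v, L v = w ⬝ᵥ v) : LinearMap.range U.vecMulLinear ≤ LinearMap.ker L ↔ U *ᵥ w = 0 := by
  have hLU : ∀ c, L (c ᵥ* U) = (U *ᵥ w) ⬝ᵥ c := fun c => by
    rw [hL, dotProduct_comm, ← dotProduct_mulVec, dotProduct_comm]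
  simp only [SetLike.le_def, LinearMap.mem_range, LinearMap.mem_ker, forall_exists_index,
    forall_apply_eq_imp_iff, coe_vecMulLinear, hLU]
  exact dotProduct_eq_zero_iff

end MatrixRowSpace

theorem birch_theorem_general (n k : ℕ) (φstar : (Fin n → ℝ) → ℝ)
    (hconv : StrictConvexOn ℝ Set.univ φstar)
    (hdiff : Differentiable ℝ φstar)
    (g : (Fin n → ℝ) → (Fin n → ℝ))
    (hgrad : ∀ y v, fderiv ℝ φstar y v = ∑ i, g y i * v i)
    (U : Matrix (Fin k) (Fin n) ℝ) (yP : Fin n → ℝ)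
    (x₀ : Fin n → ℝ)
    (yB : Fin n → ℝ)
    (hmemB : ∃ c : Fin k → ℝ, yB = yP + Matrix.vecMul c U)
    (hmin : IsMinOn (fun y => φstar y - ∑ i, y i * x₀ i)
      {y : Fin n → ℝ | ∃ c : Fin k → ℝ, y = yP + Matrix.vecMul c U} yB) :
    U.mulVec (g yB) = U.mulVec x₀ ∧
    ({y : Fin n → ℝ | U.mulVec (g y) = U.mulVec x₀} ∩
      {y : Fin n → ℝ | ∃ c : Fin k → ℝ, y = yP + Matrix.vecMul c U}) = {yB} := by
  set A : AffineSubspace ℝ (Fin n → ℝ) := AffineSubspace.mk' yP (LinearMap.range U.vecMulLinear)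
  have hA : {y : Fin n → ℝ | ∃ c : Fin k → ℝ, y = yP + c ᵥ* U} = A := setOf_eq_add_vecMul_eq_mk' yP
  let ℓ : (Fin n → ℝ) →L[ℝ] ℝ := LinearMap.toContinuousLinearMap (dotProductBilin ℝ ℝ x₀)
  have hfℓ : (fun y => φstar y - ∑ i, y i * x₀ i) = fun y => φstar y - ℓ y := by
    funext y
    simp [ℓ, dotProduct, mul_comm]
  have hf : ∀ y, HasFDerivAt (fun y => φstar y - ℓ y) (fderiv ℝ φstar y - ℓ) y := fun y =>
    (hdiff y).hasFDerivAt.sub ℓ.hasFDerivAt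
  have hfconv : StrictConvexOn ℝ A (fun y => φstar y - ℓ y) :=
    (hconv.subset (Set.subset_univ _) A.convex).sub_concaveOn (ℓ.toLinearMap.concaveOn A.convex)
  have hstat : ∀ y, A.direction ≤ LinearMap.ker (fderiv ℝ φstar y - ℓ : _ →ₗ[ℝ] ℝ) ↔
      U *ᵥ g y = U *ᵥ x₀ := fun y => by
    rw [AffineSubspace.direction_mk', range_vecMulLinear_le_ker_iff (w := g y - x₀),
      mulVec_sub, sub_eq_zero]
    intro v
    simp [ℓ, hgrad, dotProduct, sub_mul]
  replace hmemB : yB ∈ A := by rw [← SetLike.mem_coe, ← hA]; exact hmemB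
  rw [hA, hfℓ] at hmin
  have hB := hmin.direction_le_ker_of_hasFDerivAt hmemB (hf yB)
  refine ⟨(hstat yB).1 hB, ?_⟩
  rw [hA]
  ext y
  constructor
  · rintro ⟨hy, hyA⟩
    exact hfconv.eq_of_isMinOn_of_direction_le_ker hmin hmemB hyA (hf y) ((hstat y).2 hy)
  · rintro rfl
    exact ⟨(hstat _).1 hB, hmemB⟩

/-- Birch's theorem, uniqueness/characterization: if the
strictly convex function y ↦ φ*(y) - ⟨y,x₀⟩ restricted to the affine subspace
A = y^P + Im(Uᵀ) attains a minimum at y^B, then y^B satisfies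
U ∂φ*(y^B) = U x₀, and the intersection of the isochoric stoichiometric
manifold {y : U ∂φ*(y) = U x₀} with A is exactly {y^B}. -/
theorem birch_theorem (n k : ℕ) (φstar : (Fin n → ℝ) → ℝ)
    (hconv : StrictConvexOn ℝ Set.univ φstar)
    (hdiff : Differentiable ℝ φstar)
    (g : (Fin n → ℝ) → (Fin n → ℝ))
    (hgrad : ∀ y v, fderiv ℝ φstar y v = ∑ i, g y i * v i)
    (U : Matrix (Fin k) (Fin n) ℝ) (yP : Fin n → ℝ)
    (x₀ : Fin n → ℝ) (hx₀ : ∀ i, 0 < x₀ i)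
    (yB : Fin n → ℝ)
    (hmemB : ∃ c : Fin k → ℝ, yB = yP + Matrix.vecMul c U)
    (hmin : IsMinOn (fun y => φstar y - ∑ i, y i * x₀ i)
      {y : Fin n → ℝ | ∃ c : Fin k → ℝ, y = yP + Matrix.vecMul c U} yB) :
    U.mulVec (g yB) = U.mulVec x₀ ∧
    ({y : Fin n → ℝ | U.mulVec (g y) = U.mulVec x₀} ∩
      {y : Fin n → ℝ | ∃ c : Fin k → ℝ, y = yP + Matrix.vecMul c U}) = {yB} :=
  birch_theorem_general n k φstar hconv hdiff g hgrad U yP x₀ yB hmemB hmin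
end

section
/- Let φ* be strictly convex and differentiable and let y^{B1}, y^{B2} be two Birch points for conserved quantities L/α₁ and L/α₂ respectively with α₁, α₂ > 0, L ≠ 0, i.e., U ∂φ*(y^{Bj}) = L/α_j and y^{B2} - y^{B1} ∈ Im(Uᵀ). If the first row of U is chosen as u = y^{B2} - y^{B1} (assuming u ∈ rowspace U, u ≠ 0), then ⟨u, ∂φ*(y^{B1})⟩ and ⟨u, ∂φ*(y^{B2})⟩ are proportional with positive ratio α₁⁻¹·α₂ > 0, hence have the same sign. Combined with the opposite-sign property from strict convexity, this yields φ*(y^{B1}) ≠ φ*(y^{B2}); thus φ* is injective (strictly monotone) along the Birch trajectory. -/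
open Matrix

/-- two Birch points y^{B1}, y^{B2} for conserved quantities
L/α₁ and L/α₂ (α₁, α₂ > 0, L ≠ 0), with u = y^{B2} - y^{B1} in the row space
of U, have proportional directional derivatives with positive ratio:
α₁⟨u, ∂φ*(y^{B1})⟩ = α₂⟨u, ∂φ*(y^{B2})⟩ (hence the same sign); combined with
strict convexity this yields φ*(y^{B1}) ≠ φ*(y^{B2}), i.e. φ* is strictly
monotone along the Birch trajectory. -/
theorem birch_trajectory_strict_monotone (n k : ℕ)
    (φstar : (Fin n → ℝ) → ℝ)
    (hconv : StrictConvexOn ℝ Set.univ φstar)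
    (hdiff : Differentiable ℝ φstar)
    (g : (Fin n → ℝ) → (Fin n → ℝ))
    (hgrad : ∀ y v, fderiv ℝ φstar y v = ∑ i, g y i * v i)
    (U : Matrix (Fin k) (Fin n) ℝ) (L : Fin k → ℝ) (hL : L ≠ 0)
    (α₁ α₂ : ℝ) (hα₁ : 0 < α₁) (hα₂ : 0 < α₂)
    (y1 y2 : Fin n → ℝ) (hne : y1 ≠ y2)
    (hB1 : U.mulVec (g y1) = α₁⁻¹ • L)
    (hB2 : U.mulVec (g y2) = α₂⁻¹ • L)
    (hmem : ∃ c : Fin k → ℝ, y2 - y1 = Matrix.vecMul c U) :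
    α₁ * (∑ i, (y2 i - y1 i) * g y1 i) =
      α₂ * (∑ i, (y2 i - y1 i) * g y2 i) ∧
    φstar y1 ≠ φstar y2 := by
  obtain ⟨c, hc⟩ := hmem
  -- rewrite the sums as dot products
  have key : ∀ y : Fin n → ℝ, (∑ i, (y2 i - y1 i) * g y i)
      = c ⬝ᵥ U.mulVec (g y) := by
    intro y
    rw [Matrix.dotProduct_mulVec, ← hc]
    simp [dotProduct, Pi.sub_apply]
  have hs1 : ∑ i, (y2 i - y1 i) * g y1 i = α₁⁻¹ * (c ⬝ᵥ L) := by
    rw [key, hB1]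
    simp only [dotProduct, Pi.smul_apply, smul_eq_mul, Finset.mul_sum]
    exact Finset.sum_congr rfl fun i _ => by ring
  have hs2 : ∑ i, (y2 i - y1 i) * g y2 i = α₂⁻¹ * (c ⬝ᵥ L) := by
    rw [key, hB2]
    simp only [dotProduct, Pi.smul_apply, smul_eq_mul, Finset.mul_sum]
    exact Finset.sum_congr rfl fun i _ => by ring
  have hprop : α₁ * (∑ i, (y2 i - y1 i) * g y1 i) =
      α₂ * (∑ i, (y2 i - y1 i) * g y2 i) := by
    rw [hs1, hs2, ← mul_assoc, ← mul_assoc, mul_inv_cancel₀ hα₁.ne',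
      mul_inv_cancel₀ hα₂.ne']
  refine ⟨hprop, ?_⟩
  -- restrict to the line through y1, y2
  set u : Fin n → ℝ := y2 - y1 with hu
  have hune : u ≠ 0 := fun h => hne (by
    have : y2 = y1 := by
      funext i
      have := congrFun h i
      simp [hu, Pi.sub_apply] at this
      linarith
    exact this.symm)
  set h : ℝ → ℝ := fun t => φstar (y1 + t • u) with hh
  have hline_inj : Function.Injective (fun t : ℝ => y1 + t • u) := by
    intro a b hab
    have : a • u = b • u := by
      have := congrArg (fun z => z - y1) hab
      simpa [add_sub_cancel_left] using this
    by_contra hne'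
    exact hune (by
      have : (a - b) • u = 0 := by rw [sub_smul, this, sub_self]
      rcases smul_eq_zero.mp this with h' | h'
      · exact absurd (sub_eq_zero.mp h') hne'
      · exact absurd h' (fun hh' => hune hh'))
  have hconvh : StrictConvexOn ℝ Set.univ h := by
    refine ⟨convex_univ, ?_⟩
    intro a _ b _ hab p q hp hq hpq
    have hxy : y1 + a • u ≠ y1 + b • u := fun hEq => hab (hline_inj hEq)
    have := hconv.2 (Set.mem_univ (y1 + a • u)) (Set.mem_univ (y1 + b • u))
      hxy hp hq hpq
    have harg : p • (y1 + a • u) + q • (y1 + b • u)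
        = y1 + (p * a + q * b) • u := by
      calc p • (y1 + a • u) + q • (y1 + b • u)
          = (p + q) • y1 + (p * a + q * b) • u := by
            simp only [smul_add, add_smul, smul_smul]; abel
        _ = y1 + (p * a + q * b) • u := by rw [hpq, one_smul]
    rw [harg] at this
    simpa [hh, smul_eq_mul] using this
  -- derivative of h
  have hderiv : ∀ t : ℝ, HasDerivAt h (∑ i, g (y1 + t • u) i * u i) t := by
    intro t
    have hline : HasDerivAt (fun s : ℝ => y1 + s • u) u t := by
      simpa using ((hasDerivAt_id t).smul_const u).const_add y1
    have := (hdiff (y1 + t • u)).hasFDerivAt.comp_hasDerivAt t hline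
    have heq : fderiv ℝ φstar (y1 + t • u) u = ∑ i, g (y1 + t • u) i * u i :=
      hgrad _ _
    rw [heq] at this; exact this
  intro habs
  have hy2 : y1 + u = y2 := by funext i; simp [hu]
  have h01 : h 0 = h 1 := by
    show φstar (y1 + (0:ℝ) • u) = φstar (y1 + (1:ℝ) • u)
    rw [zero_smul, one_smul, add_zero, hy2]; exact habs
  -- strict convexity: h'(0) < slope < h'(1)
  have hd0 := hconvh.lt_slope_of_hasDerivAt (Set.mem_univ (0:ℝ))
    (Set.mem_univ (1:ℝ)) one_pos (hderiv 0)
  have hd1 := hconvh.slope_lt_of_hasDerivAt (Set.mem_univ (0:ℝ))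
    (Set.mem_univ (1:ℝ)) one_pos (hderiv 1)
  have hslope : slope h 0 1 = 0 := by
    simp [slope, h01]
  rw [hslope] at hd0 hd1
  have e0 : (∑ i, g (y1 + (0:ℝ) • u) i * u i) = ∑ i, (y2 i - y1 i) * g y1 i := by
    simp [hu, mul_comm]
  have e1 : (∑ i, g (y1 + (1:ℝ) • u) i * u i) = ∑ i, (y2 i - y1 i) * g y2 i := by
    have : y1 + (1:ℝ) • u = y2 := by funext i; simp [hu, Pi.sub_apply]
    rw [this]; simp [hu, mul_comm]
  rw [e0] at hd0
  rw [e1] at hd1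
  nlinarith [mul_pos hα₂ hd1, mul_pos hα₁ (neg_pos.mpr hd0)]
end
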